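/- arXiv:1910.06097 — 2 statements merged into one kernel-verified Lean document; each statement's English description precedes it below -/
import Mathlib

section
/- Let {X_{n,i} : n,i ≥ 1} be a family of identically distributed real random variables with E(X_{1,1}) = μ and E(X_{1,1}^4) < ∞, such that for every fixed n ≥ 1 the family {X_{n,i} : i ≥ 1} is mutually independent. Let (s_n) be a sequence of natural numbers with s_n ≥ a·n for every n ≥ 1 and some fixed a > 0. Set S_n = Σ_{i=1}^{s_n} X_{n,i}. Then S_n / s_n → μ almost surely as n → ∞. -/
open MeasureTheory ProbabilityTheory Filter Finset
open scoped ENNReal NNReal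

section Aux

variable {Ω : Type*} [MeasurableSpace Ω] {μ : Measure Ω}

lemma aux_iIndepFun_ae_eq {f g : ℕ → Ω → ℝ}
    (hf : iIndepFun f μ) (h : ∀ i, f i =ᵐ[μ] g i) :
    iIndepFun g μ := by
  rw [iIndepFun_iff_measure_inter_preimage_eq_mul] at hf ⊢
  intro S sets hsets
  have key : ∀ S' : Finset ℕ, μ (⋂ i ∈ S', g i ⁻¹' sets i) = μ (⋂ i ∈ S', f i ⁻¹' sets i) := by
    intro S'
    apply measure_congr
    rw [Filter.eventuallyEq_set]
    have H : ∀ᵐ ω ∂μ, ∀ i ∈ S', f i ω = g i ω :=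
      (ae_ball_iff S'.countable_toSet).2 fun i _ => h i
    filter_upwards [H] with ω hω
    simp only [Set.mem_iInter, Set.mem_preimage]
    exact ⟨fun h' i hi => (hω i hi) ▸ h' i hi, fun h' i hi => (hω i hi).symm ▸ h' i hi⟩
  rw [key S, hf S hsets]
  refine Finset.prod_congr rfl fun i hi => ?_
  have := key {i}
  simpa using this.symm

lemma aux_memLp4 {f : Ω → ℝ} (hmeas : AEStronglyMeasurable f μ)
    (h4 : Integrable (fun ω => f ω ^ 4) μ) : MemLp f 4 μ := by
  have heq : (fun x => ‖f x‖ ^ ((4 : ℝ≥0∞).toReal)) = fun x => f x ^ 4 := by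
    funext x
    rw [show ((4:ℝ≥0∞).toReal) = ((4:ℕ):ℝ) by norm_num, Real.rpow_natCast]
    rw [Real.norm_eq_abs, ← abs_pow, abs_of_nonneg (by positivity)]
  have h : MemLp (fun x => ‖f x‖ ^ ((4 : ℝ≥0∞).toReal)) 1 μ := by
    rw [memLp_one_iff_integrable, heq]; exact h4
  rw [show (1:ℝ≥0∞) = 4/4 by rw [ENNReal.div_self] <;> norm_num] at h
  exact (memLp_norm_rpow_iff (p := 4) (q := 4) hmeas (by norm_num) (by norm_num)).1 h

lemma aux_integrable_pow [IsProbabilityMeasure μ] {f : Ω → ℝ} (hf : MemLp f 4 μ)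
    {k : ℕ} (hk0 : k ≠ 0) (hk : k ≤ 4) : Integrable (fun ω => f ω ^ k) μ := by
  have hk' : (k : ℝ≥0∞) ≤ 4 := by exact_mod_cast hk
  have h : MemLp f k μ := hf.mono_exponent hk'
  have h2 := h.integrable_norm_rpow (by exact_mod_cast hk0) (by simp)
  refine h2.mono' (hf.aestronglyMeasurable.aemeasurable.pow_const k).aestronglyMeasurable ?_
  filter_upwards with x
  rw [ENNReal.toReal_natCast, Real.rpow_natCast, norm_pow]

lemma aux_moments [IsProbabilityMeasure μ] {Y : ℕ → Ω → ℝ}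
    (hmeas : ∀ i, Measurable (Y i))
    (hindep : iIndepFun Y μ)
    {σ2 τ : ℝ}
    (hL4 : ∀ i, MemLp (Y i) 4 μ)
    (h1 : ∀ i, ∫ ω, Y i ω ∂μ = 0)
    (h2 : ∀ i, ∫ ω, (Y i ω) ^ 2 ∂μ = σ2)
    (h4 : ∀ i, ∫ ω, (Y i ω) ^ 4 ∂μ = τ)
    (hστ : σ2 ^ 2 ≤ τ) (F : Finset ℕ) :
    (∫ ω, ∑ i ∈ F, Y i ω ∂μ = 0) ∧
    (∫ ω, (∑ i ∈ F, Y i ω) ^ 2 ∂μ = F.card * σ2) ∧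
    (∫ ω, (∑ i ∈ F, Y i ω) ^ 4 ∂μ ≤ 3 * τ * F.card ^ 2) := by
  classical
  have hτ : 0 ≤ τ := le_trans (sq_nonneg σ2) hστ
  induction F using Finset.cons_induction with
  | empty => simp
  | cons i F hi IH =>
    obtain ⟨IH1, IH2, IH4⟩ := IH
    set T : Ω → ℝ := fun ω => ∑ j ∈ F, Y j ω with hTdef
    set Z : Ω → ℝ := Y i with hZdef
    have hsum_eq : ∀ ω, ∑ j ∈ Finset.cons i F hi, Y j ω = T ω + Z ω := by
      intro ω; rw [Finset.sum_cons]; ring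
    have hTL4 : MemLp T 4 μ := by
      have h := memLp_finset_sum' (μ := μ) F (fun j (_ : j ∈ F) => hL4 j)
      have he : (∑ j ∈ F, Y j) = T := by funext ω; simp [hTdef]
      rwa [he] at h
    have hZL4 : MemLp Z 4 μ := hL4 i
    have hTmeas : Measurable T := Finset.measurable_sum F fun j _ => hmeas j
    have intT : ∀ k : ℕ, k ≠ 0 → k ≤ 4 → Integrable (fun ω => T ω ^ k) μ :=
      fun k hk0 hk => aux_integrable_pow hTL4 hk0 hk
    have intZ : ∀ k : ℕ, k ≠ 0 → k ≤ 4 → Integrable (fun ω => Z ω ^ k) μ :=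
      fun k hk0 hk => aux_integrable_pow hZL4 hk0 hk
    have hTZ : IndepFun T Z μ := by
      have := hindep.indepFun_finsetSum_of_notMem hmeas hi
      have he : (∑ j ∈ F, Y j) = T := by funext ω; simp [hTdef]
      rwa [he] at this
    have hTZab : ∀ a b : ℕ, IndepFun (fun ω => T ω ^ a) (fun ω => Z ω ^ b) μ := by
      intro a b
      exact hTZ.comp (measurable_id.pow_const a) (measurable_id.pow_const b)
    have intab : ∀ a b : ℕ, a ≠ 0 → b ≠ 0 → a ≤ 4 → b ≤ 4 →
        Integrable (fun ω => T ω ^ a * Z ω ^ b) μ := by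
      intro a b ha hb ha4 hb4
      exact (hTZab a b).integrable_mul (intT a ha ha4) (intZ b hb hb4)
    have Eab : ∀ a b : ℕ, (∫ ω, T ω ^ a * Z ω ^ b ∂μ) =
        (∫ ω, T ω ^ a ∂μ) * (∫ ω, Z ω ^ b ∂μ) := by
      intro a b
      exact (hTZab a b).integral_mul_eq_mul_integral
        ((hTmeas.pow_const a).aestronglyMeasurable)
        (((hmeas i).pow_const b).aestronglyMeasurable)
    have intT1 : Integrable T μ := by
      have := intT 1 one_ne_zero (by norm_num); simpa using this
    have intZ1 : Integrable Z μ := by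
      have := intZ 1 one_ne_zero (by norm_num); simpa using this
    have E11 : (∫ ω, T ω * Z ω ∂μ) = 0 := by
      have := Eab 1 1
      simp only [pow_one] at this
      rw [this, IH1, zero_mul]
    have EZ : ∫ ω, Z ω ∂μ = 0 := h1 i
    have hsq : ∫ ω, (∑ j ∈ Finset.cons i F hi, Y j ω) ^ 2 ∂μ
        = (F.card : ℝ) * σ2 + σ2 := by
      have e : ∀ ω, (∑ j ∈ Finset.cons i F hi, Y j ω) ^ 2
          = T ω ^ 2 + (2 * (T ω * Z ω) + Z ω ^ 2) := by
        intro ω; rw [hsum_eq]; ring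
      calc ∫ ω, (∑ j ∈ Finset.cons i F hi, Y j ω) ^ 2 ∂μ
          = ∫ ω, T ω ^ 2 + (2 * (T ω * Z ω) + Z ω ^ 2) ∂μ := by
            exact integral_congr_ae (Eventually.of_forall e)
        _ = (∫ ω, T ω ^ 2 ∂μ) + ((∫ ω, 2 * (T ω * Z ω) ∂μ) + ∫ ω, Z ω ^ 2 ∂μ) := by
            have i11 : Integrable (fun ω => T ω * Z ω) μ := by
              have := intab 1 1 one_ne_zero one_ne_zero (by norm_num) (by norm_num)
              simpa using this
            have ia : Integrable (fun ω => 2 * (T ω * Z ω)) μ := i11.const_mul 2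
            have ib : Integrable (fun ω => 2 * (T ω * Z ω) + Z ω ^ 2) μ :=
              ia.add (intZ 2 two_ne_zero (by norm_num))
            rw [integral_add (intT 2 two_ne_zero (by norm_num)) ib,
              integral_add ia (intZ 2 two_ne_zero (by norm_num))]
        _ = (F.card : ℝ) * σ2 + σ2 := by
            rw [IH2, integral_const_mul, E11, h2 i]; ring
    refine ⟨?_, ?_, ?_⟩
    · have : ∫ ω, ∑ j ∈ Finset.cons i F hi, Y j ω ∂μ = (∫ ω, T ω ∂μ) + ∫ ω, Z ω ∂μ := by
        rw [← integral_add intT1 intZ1]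
        exact integral_congr_ae (Eventually.of_forall fun ω => hsum_eq ω)
      rw [this, IH1, EZ, add_zero]
    · rw [hsq, Finset.card_cons]; push_cast; ring
    · have e : ∀ ω, (∑ j ∈ Finset.cons i F hi, Y j ω) ^ 4
          = T ω ^ 4 + (4 * (T ω ^ 3 * Z ω ^ 1) + (6 * (T ω ^ 2 * Z ω ^ 2)
            + (4 * (T ω ^ 1 * Z ω ^ 3) + Z ω ^ 4))) := by
        intro ω; rw [hsum_eq]; ring
      have i31 := intab 3 1 three_ne_zero one_ne_zero (by norm_num) (by norm_num)
      have i22 := intab 2 2 two_ne_zero two_ne_zero (by norm_num) (by norm_num)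
      have i13 := intab 1 3 one_ne_zero three_ne_zero (by norm_num) (by norm_num)
      have calc4 : ∫ ω, (∑ j ∈ Finset.cons i F hi, Y j ω) ^ 4 ∂μ
          = (∫ ω, T ω ^ 4 ∂μ) + (4 * ((∫ ω, T ω ^ 3 ∂μ) * (∫ ω, Z ω ^ 1 ∂μ))
            + (6 * ((∫ ω, T ω ^ 2 ∂μ) * (∫ ω, Z ω ^ 2 ∂μ))
            + (4 * ((∫ ω, T ω ^ 1 ∂μ) * (∫ ω, Z ω ^ 3 ∂μ)) + ∫ ω, Z ω ^ 4 ∂μ))) := by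
        rw [integral_congr_ae (Eventually.of_forall e)]
        have j31 : Integrable (fun ω => 4 * (T ω ^ 3 * Z ω ^ 1)) μ := i31.const_mul 4
        have j22 : Integrable (fun ω => 6 * (T ω ^ 2 * Z ω ^ 2)) μ := i22.const_mul 6
        have j13 : Integrable (fun ω => 4 * (T ω ^ 1 * Z ω ^ 3)) μ := i13.const_mul 4
        have jZ4 : Integrable (fun ω => Z ω ^ 4) μ := intZ 4 (by norm_num) (by norm_num)
        have k3 : Integrable (fun ω => 4 * (T ω ^ 1 * Z ω ^ 3) + Z ω ^ 4) μ := j13.add jZ4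
        have k2 : Integrable (fun ω => 6 * (T ω ^ 2 * Z ω ^ 2)
            + (4 * (T ω ^ 1 * Z ω ^ 3) + Z ω ^ 4)) μ := j22.add k3
        have k1 : Integrable (fun ω => 4 * (T ω ^ 3 * Z ω ^ 1) + (6 * (T ω ^ 2 * Z ω ^ 2)
            + (4 * (T ω ^ 1 * Z ω ^ 3) + Z ω ^ 4))) μ := j31.add k2
        rw [integral_add (intT 4 (by norm_num) (by norm_num)) k1,
          integral_add j31 k2, integral_add j22 k3, integral_add j13 jZ4,
          integral_const_mul, integral_const_mul, integral_const_mul, Eab 3 1, Eab 2 2, Eab 1 3]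
      rw [calc4]
      have hZ1 : ∫ ω, Z ω ^ 1 ∂μ = 0 := by simpa using EZ
      have hT1 : ∫ ω, T ω ^ 1 ∂μ = 0 := by simpa using IH1
      rw [hZ1, hT1, IH2, h2 i, h4 i, Finset.card_cons]
      push_cast
      have hc : (0:ℝ) ≤ (F.card : ℝ) := Nat.cast_nonneg _
      nlinarith [IH4, mul_le_mul_of_nonneg_left hστ (by positivity : (0:ℝ) ≤ 6 * (F.card:ℝ))]

end Aux

/-- Rowwise-independent strong law of large numbers with fourth-moment bound. -/
theorem rowwise_strong_law
    {Ω : Type*} [MeasurableSpace Ω] (μ : Measure Ω) [IsProbabilityMeasure μ]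
    (X : ℕ → ℕ → Ω → ℝ)
    (hident : ∀ n i, IdentDistrib (X n i) (X 1 1) μ μ)
    (hindep : ∀ n, iIndepFun (X n) μ)
    (m : ℝ) (hmean : ∫ ω, X 1 1 ω ∂μ = m)
    (hmom4 : Integrable (fun ω => (X 1 1 ω) ^ 4) μ)
    (s : ℕ → ℕ) (a : ℝ) (ha : 0 < a) (hs : ∀ n : ℕ, 1 ≤ n → a * n ≤ s n) :
    ∀ᵐ ω ∂μ, Tendsto
      (fun n => (∑ i ∈ Finset.range (s n), X n (i + 1) ω) / (s n : ℝ))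
      atTop (nhds m) := by
  classical
  have hX : ∀ n i, AEMeasurable (X n i) μ := fun n i => (hident n i).aemeasurable_fst
  set X' : ℕ → ℕ → Ω → ℝ := fun n i => (hX n i).mk (X n i) with hX'def
  have haeq : ∀ n i, X n i =ᵐ[μ] X' n i := fun n i => (hX n i).ae_eq_mk
  have hmeasX' : ∀ n i, Measurable (X' n i) := fun n i => (hX n i).measurable_mk
  have hident' : ∀ n i, IdentDistrib (X' n i) (X' 1 1) μ μ := fun n i =>
    ((IdentDistrib.of_ae_eq (hX n i) (haeq n i)).symm.trans
      ((hident n i).trans (IdentDistrib.of_ae_eq (hX 1 1) (haeq 1 1))))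
  have hindep' : ∀ n, iIndepFun (X' n) μ :=
    fun n => aux_iIndepFun_ae_eq (hindep n) (fun i => haeq n i)
  -- the centered reference variable
  set W : Ω → ℝ := fun ω => X' 1 1 ω - m with hWdef
  have hX11L4 : MemLp (X' 1 1) 4 μ := by
    refine aux_memLp4 (hmeasX' 1 1).aestronglyMeasurable ?_
    refine hmom4.congr ?_
    filter_upwards [haeq 1 1] with ω hω
    rw [hω]
  have hWL4 : MemLp W 4 μ := hX11L4.sub (memLp_const m)
  have hWmeas : Measurable W := (hmeasX' 1 1).sub measurable_const
  set σ2 : ℝ := ∫ ω, W ω ^ 2 ∂μ with hσ2def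
  set τ : ℝ := ∫ ω, W ω ^ 4 ∂μ with hτdef
  have hτint : Integrable (fun ω => W ω ^ 4) μ :=
    aux_integrable_pow hWL4 (by norm_num) (by norm_num)
  have hστ : σ2 ^ 2 ≤ τ := by
    have hW2 : MemLp (fun ω => W ω ^ 2) 2 μ := by
      refine (memLp_two_iff_integrable_sq
        ((hWmeas.pow_const 2).aestronglyMeasurable)).2 ?_
      refine hτint.congr ?_
      filter_upwards with ω
      ring
    have hv := variance_nonneg (fun ω => W ω ^ 2) μ
    rw [variance_eq_sub hW2] at hv
    have e1 : μ[(fun ω => W ω ^ 2) ^ 2] = τ := by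
      rw [hτdef]
      apply integral_congr_ae
      filter_upwards with ω
      simp [Pi.pow_apply]; ring
    have e2 : μ[(fun ω => W ω ^ 2)] = σ2 := rfl
    rw [e1, e2] at hv
    linarith
  have hW0 : ∫ ω, W ω ∂μ = 0 := by
    have hint : Integrable (X' 1 1) μ := hX11L4.integrable (by norm_num)
    have hm' : ∫ ω, X' 1 1 ω ∂μ = m := by
      rw [← hmean]
      exact integral_congr_ae (haeq 1 1).symm
    rw [hWdef]
    simp only
    rw [integral_sub hint (integrable_const m), hm', integral_const]
    simp
  -- identically distributed centered variables
  have hYid : ∀ n i, IdentDistrib (fun ω => X' n i ω - m) W μ μ :=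
    fun n i => (hident' n i).sub_const m
  have hYL4 : ∀ n i, MemLp (fun ω => X' n i ω - m) 4 μ :=
    fun n i => (hYid n i).symm.memLp_snd hWL4
  have hY1 : ∀ n i, ∫ ω, (X' n i ω - m) ∂μ = 0 :=
    fun n i => ((hYid n i).integral_eq).trans hW0
  have hY2 : ∀ n i, ∫ ω, (X' n i ω - m) ^ 2 ∂μ = σ2 :=
    fun n i => (hYid n i).pow.integral_eq
  have hY4 : ∀ n i, ∫ ω, (X' n i ω - m) ^ 4 ∂μ = τ :=
    fun n i => (hYid n i).pow.integral_eq
  have hτ0 : 0 ≤ τ := le_trans (sq_nonneg σ2) hστ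
  -- fourth moment bound for row sums
  have key : ∀ n : ℕ, 1 ≤ n →
      ∫ ω, (∑ i ∈ Finset.range (s n), (X' n (i + 1) ω - m)) ^ 4 ∂μ
        ≤ 3 * τ * (s n : ℝ) ^ 2 := by
    intro n hn
    have hinj : Function.Injective (fun i : ℕ => i + 1) := add_left_injective 1
    set F : Finset ℕ := (Finset.range (s n)).image (fun i => i + 1) with hFdef
    have hcard : F.card = s n := by
      rw [hFdef, Finset.card_image_of_injective _ hinj, Finset.card_range]
    have hindepY : iIndepFun (fun i ω => X' n i ω - m) μ := by
      have := (hindep' n).comp (fun _ => fun x => x - m)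
        (fun _ => measurable_id.sub_const m)
      exact this
    have hmom := aux_moments (fun i => (hmeasX' n i).sub_const m) hindepY
      (fun i => hYL4 n i) (fun i => hY1 n i) (fun i => hY2 n i) (fun i => hY4 n i) hστ F
    have hsum : ∀ ω, ∑ i ∈ F, (X' n i ω - m)
        = ∑ i ∈ Finset.range (s n), (X' n (i + 1) ω - m) := by
      intro ω
      rw [hFdef, Finset.sum_image (fun x _ y _ h => hinj h)]
    calc ∫ ω, (∑ i ∈ Finset.range (s n), (X' n (i + 1) ω - m)) ^ 4 ∂μ
        = ∫ ω, (∑ i ∈ F, (X' n i ω - m)) ^ 4 ∂μ := by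
          apply integral_congr_ae
          filter_upwards with ω
          rw [hsum ω]
      _ ≤ 3 * τ * (F.card : ℝ) ^ 2 := hmom.2.2
      _ = 3 * τ * (s n : ℝ) ^ 2 := by rw [hcard]
  -- Borel–Cantelli
  set U : ℕ → Ω → ℝ := fun n ω =>
    (∑ i ∈ Finset.range (s n), (X' n (i + 1) ω - m)) / (s n : ℝ) with hUdef
  have hBC : ∀ j : ℕ, ∀ᵐ ω ∂μ, ∀ᶠ n in atTop, |U (n + 1) ω| < 1 / (j + 1 : ℝ) := by
    intro j
    set ε : ℝ := 1 / (j + 1 : ℝ) with hεdef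
    have hε : 0 < ε := by positivity
    set C : ℝ := 3 * τ / (ε ^ 4 * a ^ 2) with hCdef
    have hC0 : 0 ≤ C := by positivity
    have hbound : ∀ n : ℕ, μ {ω | ε ≤ |U (n + 1) ω|}
        ≤ ENNReal.ofReal (C * (1 / ((n + 1 : ℕ) : ℝ) ^ 2)) := by
      intro n
      set k : ℕ := n + 1 with hkdef
      have hk : 1 ≤ k := Nat.le_add_left 1 n
      have hsk : a * k ≤ s k := hs k hk
      have hskpos : (0 : ℝ) < (s k : ℝ) := by
        have : (0:ℝ) < a * k := by positivity
        linarith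
      set G : Ω → ℝ := fun ω => ∑ i ∈ Finset.range (s k), (X' k (i + 1) ω - m) with hGdef
      have hGL4 : MemLp G 4 μ := by
        have h := memLp_finset_sum' (μ := μ) (Finset.range (s k))
          (fun i (_ : i ∈ Finset.range (s k)) => hYL4 k (i + 1))
        have he : (∑ i ∈ Finset.range (s k), fun ω => X' k (i + 1) ω - m) = G := by
          funext ω; simp [hGdef]
        rwa [he] at h
      have hGint : Integrable (fun ω => G ω ^ 4) μ :=
        aux_integrable_pow hGL4 (by norm_num) (by norm_num)
      have hG4 : ∫ ω, G ω ^ 4 ∂μ ≤ 3 * τ * (s k : ℝ) ^ 2 := key k hk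
      set c : ℝ := (ε * (s k : ℝ)) ^ 4 with hcdef
      have hc : 0 < c := by positivity
      have hsub : {ω | ε ≤ |U k ω|} ⊆ {ω | c ≤ G ω ^ 4} := by
        intro ω hω
        simp only [Set.mem_setOf_eq] at hω ⊢
        have h1 : ε ≤ |G ω| / (s k : ℝ) := by
          have h0 : ε ≤ |G ω / (s k : ℝ)| := hω
          rwa [abs_div, abs_of_pos hskpos] at h0
        have h2 : ε * (s k : ℝ) ≤ |G ω| := by
          rw [div_eq_mul_inv] at h1
          calc ε * (s k : ℝ) ≤ (|G ω| * ((s k : ℝ))⁻¹) * (s k : ℝ) :=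
                mul_le_mul_of_nonneg_right h1 hskpos.le
            _ = |G ω| := by field_simp
        calc c = (ε * (s k : ℝ)) ^ 4 := rfl
          _ ≤ |G ω| ^ 4 := pow_le_pow_left₀ (by positivity) h2 4
          _ = G ω ^ 4 := by
              rw [← abs_pow, abs_of_nonneg (by positivity)]
      have hmarkov := mul_meas_ge_le_integral_of_nonneg
        (Eventually.of_forall (fun ω => by positivity : ∀ ω, (0:ℝ) ≤ G ω ^ 4)) hGint c
      have htoReal : (μ {ω | ε ≤ |U k ω|}).toReal ≤ (3 * τ * (s k : ℝ) ^ 2) / c := by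
        have h1 : (μ {ω | ε ≤ |U k ω|}).toReal ≤ (μ {ω | c ≤ G ω ^ 4}).toReal :=
          ENNReal.toReal_mono (measure_ne_top _ _) (measure_mono hsub)
        have h2 : (μ {ω | c ≤ G ω ^ 4}).toReal ≤ (∫ ω, G ω ^ 4 ∂μ) / c := by
          rw [le_div_iff₀ hc]
          calc (μ {ω | c ≤ G ω ^ 4}).toReal * c
              = c * (μ {x | c ≤ G x ^ 4}).toReal := by ring
            _ ≤ ∫ ω, G ω ^ 4 ∂μ := hmarkov
        have h3 : (∫ ω, G ω ^ 4 ∂μ) / c ≤ (3 * τ * (s k : ℝ) ^ 2) / c := by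
          gcongr
        linarith
      have hknz : ((k : ℕ) : ℝ) ≠ 0 := Nat.cast_ne_zero.2 (by omega)
      have hcalc : (3 * τ * (s k : ℝ) ^ 2) / c ≤ C * (1 / ((k : ℕ) : ℝ) ^ 2) := by
        have hε4 : (0:ℝ) < ε ^ 4 := by positivity
        have hsk2 : (a * (k : ℝ)) ^ 2 ≤ (s k : ℝ) ^ 2 :=
          pow_le_pow_left₀ (by positivity) hsk 2
        have e : (3 * τ * (s k : ℝ) ^ 2) / c = (3 * τ) / (ε ^ 4 * (s k : ℝ) ^ 2) := by
          rw [hcdef, mul_pow]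
          field_simp
        rw [e]
        have h5 : (3 * τ) / (ε ^ 4 * (s k : ℝ) ^ 2)
            ≤ (3 * τ) / (ε ^ 4 * (a * (k : ℝ)) ^ 2) := by
          rw [div_le_div_iff₀ (by positivity) (by positivity)]
          nlinarith [mul_le_mul_of_nonneg_left hsk2 (by positivity : (0:ℝ) ≤ 3 * τ * ε ^ 4)]
        have h6 : (3 * τ) / (ε ^ 4 * (a * (k : ℝ)) ^ 2) = C * (1 / ((k : ℕ) : ℝ) ^ 2) := by
          rw [hCdef, div_mul_div_comm, mul_one, mul_pow, mul_assoc]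
        rw [← h6]
        exact h5
      calc μ {ω | ε ≤ |U (n + 1) ω|}
          = ENNReal.ofReal ((μ {ω | ε ≤ |U k ω|}).toReal) :=
            (ENNReal.ofReal_toReal (measure_ne_top _ _)).symm
        _ ≤ ENNReal.ofReal (C * (1 / ((n + 1 : ℕ) : ℝ) ^ 2)) :=
            ENNReal.ofReal_le_ofReal (htoReal.trans hcalc)
    have hsum1 : Summable (fun n : ℕ => C * (1 / ((n + 1 : ℕ) : ℝ) ^ 2)) := by
      have h0 : Summable (fun n : ℕ => 1 / ((n : ℝ)) ^ 2) := by
        simpa using Real.summable_one_div_nat_pow.2 (by norm_num : 1 < 2)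
      have h1 : Summable (fun n : ℕ => 1 / ((n + 1 : ℕ) : ℝ) ^ 2) := by
        have := (summable_nat_add_iff 1).2 h0
        exact_mod_cast this
      exact h1.mul_left C
    have hne : (∑' n, μ {ω | ε ≤ |U (n + 1) ω|}) ≠ ⊤ := by
      apply ne_top_of_le_ne_top ?_ (ENNReal.tsum_le_tsum hbound)
      rw [← ENNReal.ofReal_tsum_of_nonneg (fun n => by positivity) hsum1]
      exact ENNReal.ofReal_ne_top
    have hzero := measure_setOf_frequently_eq_zero
      (μ := μ) (p := fun n ω => ε ≤ |U (n + 1) ω|) hne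
    have hae : ∀ᵐ ω ∂μ, ω ∉ {ω | ∃ᶠ n in atTop, ε ≤ |U (n + 1) ω|} :=
      measure_eq_zero_iff_ae_notMem.1 hzero
    refine hae.mono fun ω hω => ?_
    have hω' : ∀ᶠ n in atTop, ¬ (ε ≤ |U (n + 1) ω|) := Filter.not_frequently.1 hω
    exact hω'.mono fun n hn => not_le.1 hn
  -- assemble
  have hAE : ∀ᵐ ω ∂μ, ∀ j : ℕ, ∀ᶠ n in atTop, |U (n + 1) ω| < 1 / (j + 1 : ℝ) :=
    ae_all_iff.2 hBC
  have hEQ : ∀ᵐ ω ∂μ, ∀ n i : ℕ, X n i ω = X' n i ω :=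
    ae_all_iff.2 fun n => ae_all_iff.2 fun i => haeq n i
  filter_upwards [hAE, hEQ] with ω h1ω h2ω
  rw [Metric.tendsto_atTop]
  intro δ hδ
  obtain ⟨j, hj⟩ := exists_nat_one_div_lt hδ
  obtain ⟨N, hN⟩ := Filter.eventually_atTop.1 (h1ω j)
  refine ⟨max (N + 1) 1, fun n hn => ?_⟩
  have hn1 : 1 ≤ n := le_trans (le_max_right _ _) hn
  have hnN : N ≤ n - 1 := by
    have := le_trans (le_max_left (N + 1) 1) hn
    omega
  have hU : |U n ω| < 1 / (j + 1 : ℝ) := by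
    have h := hN (n - 1) hnN
    rwa [Nat.sub_add_cancel hn1] at h
  have hsn : (0 : ℝ) < (s n : ℝ) := by
    have h1 : (0:ℝ) < a * n := by
      have : (0:ℝ) < (n:ℝ) := by exact_mod_cast hn1
      positivity
    linarith [hs n hn1]
  have hfn : (∑ i ∈ Finset.range (s n), X n (i + 1) ω) / (s n : ℝ) - m = U n ω := by
    have e1 : ∑ i ∈ Finset.range (s n), X n (i + 1) ω
        = ∑ i ∈ Finset.range (s n), X' n (i + 1) ω :=
      Finset.sum_congr rfl fun i _ => h2ω n (i + 1)
    have e2 : ∑ i ∈ Finset.range (s n), (X' n (i + 1) ω - m)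
        = (∑ i ∈ Finset.range (s n), X' n (i + 1) ω) - (s n : ℝ) * m := by
      rw [Finset.sum_sub_distrib, Finset.sum_const, Finset.card_range, nsmul_eq_mul]
    show _ = (∑ i ∈ Finset.range (s n), (X' n (i + 1) ω - m)) / (s n : ℝ)
    rw [e2, e1, sub_div, mul_comm, mul_div_assoc, div_self (ne_of_gt hsn), mul_one]
  have : dist ((∑ i ∈ Finset.range (s n), X n (i + 1) ω) / (s n : ℝ)) m
      = |U n ω| := by
    rw [Real.dist_eq, hfn]
  rw [this]
  exact lt_trans hU hj
end

section
/- Let M be a finite irreducible Markov chain generating a random infinite word w over alphabet Σ (each state emits a letter), and let s : ℕ → ℕ be an arbitrary offset function. Then for every letter σ, the frequency |w_{s(n)+1..s(n)+n}|_σ / n of σ in the infix of length n starting at position s(n)+1 converges almost surely to f_σ, the stationary frequency of σ, as n → ∞. -/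
open MeasureTheory ProbabilityTheory Filter Finset

/-- `IsMarkovTraj P init X μ`: the process `X` on `(Ω, μ)` is a Markov chain with
transition matrix `P` and initial distribution `init`, expressed via its
finite-dimensional distributions. -/
def IsMarkovTraj {Ω Q : Type*} [MeasurableSpace Ω] [Fintype Q]
    (P : Q → Q → ℝ) (init : Q → ℝ) (X : ℕ → Ω → Q) (μ : Measure Ω) : Prop :=
  (∀ q, 0 ≤ init q) ∧ (∑ q, init q) = 1 ∧
  (∀ q q', 0 ≤ P q q') ∧ (∀ q, (∑ q', P q q') = 1) ∧
  (∀ n, Measurable[inferInstance, ⊤] (X n)) ∧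
  ∀ (n : ℕ) (path : ℕ → Q),
    μ {ω | ∀ i ≤ n, X i ω = path i} =
      ENNReal.ofReal (init (path 0) * ∏ i ∈ Finset.range n, P (path i) (path (i + 1)))

/-- Irreducibility (connectedness) of a transition matrix. -/
def IsIrreducibleMatrix {Q : Type*} (P : Q → Q → ℝ) : Prop :=
  ∀ q q' : Q, ∃ (k : ℕ) (path : ℕ → Q), path 0 = q ∧ path k = q' ∧
    ∀ i < k, 0 < P (path i) (path (i + 1))

/-- `π` is a stationary distribution of `P`. -/
def IsStationaryDistr {Q : Type*} [Fintype Q] (P : Q → Q → ℝ) (π : Q → ℝ) : Prop :=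
  (∀ q, 0 ≤ π q) ∧ (∑ q, π q) = 1 ∧ ∀ q, (∑ q', π q' * P q' q) = π q


section PathMeasure

variable {Q : Type*} [Fintype Q] [DecidableEq Q]
set_option linter.unusedSectionVars false

/-- extend a finite path to `ℕ → Q` -/
def extf (N : ℕ) (p : Fin (N+1) → Q) : ℕ → Q :=
  fun i => if h : i < N + 1 then p ⟨i, h⟩ else p ⟨0, Nat.succ_pos N⟩

lemma extf_lt {N : ℕ} (p : Fin (N+1) → Q) {i : ℕ} (h : i < N + 1) :
    extf N p i = p ⟨i, h⟩ := dif_pos h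

lemma extf_snoc {N : ℕ} (p : Fin (N+1) → Q) (q : Q) :
    extf (N+1) (Fin.snoc p q) = Function.update (extf N p) (N+1) q := by
  funext j
  rcases lt_trichotomy j (N+1) with hj | hj | hj
  · rw [Function.update_of_ne (by omega), extf_lt _ (by omega), extf_lt _ hj]
    show (Fin.snoc p q : Fin (N+2) → Q) ((⟨j, hj⟩ : Fin (N+1)).castSucc) = _
    rw [Fin.snoc_castSucc]
  · subst hj
    rw [Function.update_self, extf_lt _ (by omega)]
    show (Fin.snoc p q : Fin (N+2) → Q) (Fin.last (N+1)) = q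
    rw [Fin.snoc_last]
  · rw [Function.update_of_ne (by omega)]
    unfold extf
    rw [dif_neg (by omega), dif_neg (by omega)]
    show (Fin.snoc p q : Fin (N+2) → Q) ((⟨0, by omega⟩ : Fin (N+1)).castSucc) = _
    rw [Fin.snoc_castSucc]

variable (P : Q → Q → ℝ) (init : Q → ℝ)

/-- path weight -/
def pmw (N : ℕ) (p : Fin (N+1) → Q) : ℝ :=
  init (extf N p 0) * ∏ i ∈ Finset.range N, P (extf N p i) (extf N p (i+1))

/-- expectation of a path functional w.r.t. the length-`N` path measure -/
def Ex (N : ℕ) (Φ : (ℕ → Q) → ℝ) : ℝ :=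
  ∑ p : Fin (N+1) → Q, pmw P init N p * Φ (extf N p)

lemma pmw_nonneg (hP0 : ∀ q q', 0 ≤ P q q') (hinit0 : ∀ q, 0 ≤ init q) (N : ℕ)
    (p : Fin (N+1) → Q) : 0 ≤ pmw P init N p :=
  mul_nonneg (hinit0 _) (Finset.prod_nonneg fun _ _ => hP0 _ _)

lemma pmw_snoc (N : ℕ) (p : Fin (N+1) → Q) (q : Q) :
    pmw P init (N+1) (Fin.snoc p q) = pmw P init N p * P (extf N p N) q := by
  unfold pmw
  rw [extf_snoc, Finset.prod_range_succ]
  rw [Function.update_of_ne (by omega), Function.update_of_ne (by omega),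
    Function.update_self]
  have hfac : ∀ i ∈ Finset.range N,
      P (Function.update (extf N p) (N+1) q i) (Function.update (extf N p) (N+1) q (i+1))
        = P (extf N p i) (extf N p (i+1)) := by
    intro i hi
    rw [Finset.mem_range] at hi
    rw [Function.update_of_ne (by omega), Function.update_of_ne (by omega)]
  rw [Finset.prod_congr rfl hfac]
  ring

lemma sum_snoc {M : Type*} [AddCommMonoid M] (N : ℕ) (F : (Fin (N+2) → Q) → M) :
    ∑ p' : Fin (N+2) → Q, F p' = ∑ p : Fin (N+1) → Q, ∑ q : Q, F (Fin.snoc p q) := by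
  rw [← Equiv.sum_comp (Fin.snocEquiv (fun _ : Fin (N+2) => Q)) F,
    Fintype.sum_prod_type]
  rw [Finset.sum_comm]
  rfl

lemma Ex_tower (N : ℕ) (Φ : (ℕ → Q) → ℝ) :
    Ex P init (N+1) Φ
      = Ex P init N (fun x => ∑ q, P (x N) q * Φ (Function.update x (N+1) q)) := by
  unfold Ex
  rw [sum_snoc]
  refine Finset.sum_congr rfl fun p _ => ?_
  rw [Finset.mul_sum]
  refine Finset.sum_congr rfl fun q _ => ?_
  rw [pmw_snoc, extf_snoc]
  ring

lemma Ex_congr (N : ℕ) {Φ Ψ : (ℕ → Q) → ℝ} (h : ∀ x, Φ x = Ψ x) :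
    Ex P init N Φ = Ex P init N Ψ :=
  Finset.sum_congr rfl fun p _ => by rw [h]

lemma Ex_const (hinit1 : (∑ q, init q) = 1) (hP1 : ∀ q, (∑ q', P q q') = 1) :
    ∀ (N : ℕ) (r : ℝ), Ex P init N (fun _ => r) = r := by
  intro N
  induction N with
  | zero =>
    intro r
    unfold Ex pmw
    rw [← Equiv.sum_comp (Equiv.funUnique (Fin 1) Q).symm]
    simp only [Finset.range_zero, Finset.prod_empty, mul_one]
    rw [← Finset.sum_mul]
    have : ∀ q : Q, extf 0 ((Equiv.funUnique (Fin 1) Q).symm q) 0 = q := fun q => by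
      rw [extf_lt _ (by omega)]; rfl
    rw [Finset.sum_congr rfl fun q _ => by rw [this]]
    rw [hinit1, one_mul]
  | succ N ih =>
    intro r
    rw [Ex_tower]
    have : ∀ x : ℕ → Q, (∑ q, P (x N) q * r) = r := by
      intro x; rw [← Finset.sum_mul, hP1, one_mul]
    rw [Ex_congr _ _ _ this, ih]

lemma Ex_mono (hP0 : ∀ q q', 0 ≤ P q q') (hinit0 : ∀ q, 0 ≤ init q) (N : ℕ)
    {Φ Ψ : (ℕ → Q) → ℝ} (h : ∀ x, Φ x ≤ Ψ x) : Ex P init N Φ ≤ Ex P init N Ψ :=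
  Finset.sum_le_sum fun p _ =>
    mul_le_mul_of_nonneg_left (h _) (pmw_nonneg P init hP0 hinit0 N p)

lemma Ex_add (N : ℕ) (Φ Ψ : (ℕ → Q) → ℝ) :
    Ex P init N (fun x => Φ x + Ψ x) = Ex P init N Φ + Ex P init N Ψ := by
  unfold Ex
  rw [← Finset.sum_add_distrib]
  exact Finset.sum_congr rfl fun p _ => by ring

lemma Ex_smul (N : ℕ) (r : ℝ) (Φ : (ℕ → Q) → ℝ) :
    Ex P init N (fun x => r * Φ x) = r * Ex P init N Φ := by
  unfold Ex
  rw [Finset.mul_sum]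
  exact Finset.sum_congr rfl fun p _ => by ring

end PathMeasure

section Moments

variable {Q : Type*} [Fintype Q] [DecidableEq Q] [Nonempty Q]
set_option linter.unusedSectionVars false

variable (P : Q → Q → ℝ) (h : Q → ℝ)

/-- one-step averaged function -/
def Pf : Q → ℝ := fun x => ∑ q, P x q * h q

/-- the martingale part -/
def mart (a m : ℕ) (x : ℕ → Q) : ℝ :=
  ∑ j ∈ Finset.range m, (h (x (a+j+1)) - Pf P h (x (a+j)))

lemma mart_update (a m : ℕ) (x : ℕ → Q) (q : Q) :
    mart P h a (m+1) (Function.update x (a+m+1) q)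
      = mart P h a m x + (h q - Pf P h (x (a+m))) := by
  unfold mart
  rw [Finset.sum_range_succ]
  congr 1
  · refine Finset.sum_congr rfl fun j hj => ?_
    rw [Finset.mem_range] at hj
    rw [Function.update_of_ne (by omega), Function.update_of_ne (by omega)]
  · rw [Function.update_self, Function.update_of_ne (by omega)]

variable {P h} (hP0 : ∀ q q', 0 ≤ P q q') (hP1 : ∀ q, (∑ q', P q q') = 1)

section cbound

variable {c : ℝ} (hc : ∀ q, |h q| ≤ c)

include hP0 hP1 hc

lemma abs_Pf_le : ∀ x, |Pf P h x| ≤ c := by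
  intro x
  calc |Pf P h x| ≤ ∑ q, |P x q * h q| := Finset.abs_sum_le_sum_abs _ _
    _ ≤ ∑ q, P x q * c := by
        refine Finset.sum_le_sum fun q _ => ?_
        rw [abs_mul, abs_of_nonneg (hP0 x q)]
        exact mul_le_mul_of_nonneg_left (hc q) (hP0 x q)
    _ = c := by rw [← Finset.sum_mul, hP1, one_mul]

lemma inner_mean : ∀ x0 : Q, (∑ q, P x0 q * (h q - Pf P h x0)) = 0 := by
  intro x0
  simp only [mul_sub, Finset.sum_sub_distrib, ← Finset.sum_mul, hP1, one_mul]
  simp [Pf]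

lemma inner_absk (k : ℕ) : ∀ x0 : Q, (∑ q, P x0 q * |h q - Pf P h x0| ^ k) ≤ (2*c) ^ k := by
  intro x0
  have hd : ∀ q, |h q - Pf P h x0| ≤ 2 * c := by
    intro q
    calc |h q - Pf P h x0| ≤ |h q| + |Pf P h x0| := abs_sub _ _
      _ ≤ c + c := add_le_add (hc q) (abs_Pf_le hP0 hP1 hc x0)
      _ = 2 * c := by ring
  calc (∑ q, P x0 q * |h q - Pf P h x0| ^ k) ≤ ∑ q, P x0 q * (2*c) ^ k := by
        refine Finset.sum_le_sum fun q _ => ?_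
        exact mul_le_mul_of_nonneg_left
          (pow_le_pow_left₀ (abs_nonneg _) (hd q) k) (hP0 x0 q)
    _ = (2*c) ^ k := by rw [← Finset.sum_mul, hP1, one_mul]

lemma hc0 : 0 ≤ c := le_trans (abs_nonneg _) (hc (Classical.arbitrary Q)) 

lemma inner2 (x0 : Q) (Sv : ℝ) :
    (∑ q, P x0 q * (Sv + (h q - Pf P h x0)) ^ 2) ≤ Sv ^ 2 + 4 * c ^ 2 := by
  have expand : ∀ q, P x0 q * (Sv + (h q - Pf P h x0)) ^ 2
      = Sv ^ 2 * P x0 q + (2 * Sv) * (P x0 q * (h q - Pf P h x0))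
        + P x0 q * |h q - Pf P h x0| ^ 2 := by
    intro q; rw [sq_abs]; ring
  rw [Finset.sum_congr rfl fun q _ => expand q, Finset.sum_add_distrib,
    Finset.sum_add_distrib, ← Finset.mul_sum, ← Finset.mul_sum,
    hP1, inner_mean hP0 hP1 hc, mul_one, mul_zero, add_zero]
  have := inner_absk hP0 hP1 hc 2 x0
  nlinarith [this]

lemma inner4 (x0 : Q) (Sv : ℝ) :
    (∑ q, P x0 q * (Sv + (h q - Pf P h x0)) ^ 4)
      ≤ Sv ^ 4 + 40 * c ^ 2 * Sv ^ 2 + 32 * c ^ 4 := by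
  set d := fun q => h q - Pf P h x0 with hd
  have expand : ∀ q, P x0 q * (Sv + d q) ^ 4
      = Sv ^ 4 * P x0 q + (4 * Sv ^ 3) * (P x0 q * d q)
        + (6 * Sv ^ 2) * (P x0 q * d q ^ 2)
        + (4 * Sv) * (P x0 q * d q ^ 3) + P x0 q * d q ^ 4 := by
    intro q; ring
  rw [Finset.sum_congr rfl fun q _ => expand q]
  rw [Finset.sum_add_distrib, Finset.sum_add_distrib, Finset.sum_add_distrib,
    Finset.sum_add_distrib, ← Finset.mul_sum, ← Finset.mul_sum, ← Finset.mul_sum,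
    ← Finset.mul_sum, hP1, inner_mean hP0 hP1 hc, mul_one, mul_zero, add_zero]
  have h2 : (∑ q, P x0 q * d q ^ 2) ≤ (2*c)^2 := by
    have := inner_absk hP0 hP1 hc 2 x0
    calc (∑ q, P x0 q * d q ^ 2) = ∑ q, P x0 q * |d q| ^ 2 := by
          refine Finset.sum_congr rfl fun q _ => by rw [sq_abs]
      _ ≤ (2*c)^2 := this
  have h2' : 0 ≤ ∑ q, P x0 q * d q ^ 2 :=
    Finset.sum_nonneg fun q _ => mul_nonneg (hP0 x0 q) (sq_nonneg _)
  have h4 : (∑ q, P x0 q * d q ^ 4) ≤ (2*c)^4 := by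
    have := inner_absk hP0 hP1 hc 4 x0
    calc (∑ q, P x0 q * d q ^ 4) = ∑ q, P x0 q * |d q| ^ 4 := by
          refine Finset.sum_congr rfl fun q _ => by
            rw [show (4:ℕ) = 2*2 from rfl, pow_mul, pow_mul, sq_abs]
      _ ≤ (2*c)^4 := this
  have h3 : |∑ q, P x0 q * d q ^ 3| ≤ (2*c)^3 := by
    calc |∑ q, P x0 q * d q ^ 3| ≤ ∑ q, |P x0 q * d q ^ 3| := Finset.abs_sum_le_sum_abs _ _
      _ = ∑ q, P x0 q * |d q| ^ 3 := by
          refine Finset.sum_congr rfl fun q _ => ?_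
          rw [abs_mul, abs_of_nonneg (hP0 x0 q), abs_pow]
      _ ≤ (2*c)^3 := inner_absk hP0 hP1 hc 3 x0
  have hcc : 0 ≤ c := hc0 hP0 hP1 hc
  have hS3 : (4 * Sv) * (∑ q, P x0 q * d q ^ 3) ≤ 16 * c^2 * Sv^2 + 16 * c^4 := by
    have habs : (4 * Sv) * (∑ q, P x0 q * d q ^ 3) ≤ 4 * |Sv| * (2*c)^3 := by
      calc (4 * Sv) * (∑ q, P x0 q * d q ^ 3) ≤ |(4 * Sv) * (∑ q, P x0 q * d q ^ 3)| :=
            le_abs_self _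
        _ = 4 * |Sv| * |∑ q, P x0 q * d q ^ 3| := by
            rw [abs_mul, abs_mul]; simp [abs_of_nonneg]
        _ ≤ 4 * |Sv| * (2*c)^3 := by
            exact mul_le_mul_of_nonneg_left h3 (by positivity)
    nlinarith [mul_nonneg (sq_nonneg c) (sq_nonneg (|Sv| - c)), sq_abs Sv]
  nlinarith [sq_nonneg Sv, sq_nonneg c]

end cbound

end Moments

section MomentBounds

variable {Q : Type*} [Fintype Q] [DecidableEq Q] [Nonempty Q]
set_option linter.unusedSectionVars false

variable {P : Q → Q → ℝ} {init : Q → ℝ} {h : Q → ℝ} {c : ℝ}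
variable (hP0 : ∀ q q', 0 ≤ P q q') (hP1 : ∀ q, (∑ q', P q q') = 1)
variable (hinit0 : ∀ q, 0 ≤ init q) (hinit1 : (∑ q, init q) = 1)
variable (hc : ∀ q, |h q| ≤ c)

include hP0 hP1 hinit0 hinit1 hc

lemma moment2 : ∀ (m a : ℕ),
    Ex P init (a+m) (fun x => (mart P h a m x) ^ 2) ≤ 4 * c ^ 2 * m := by
  intro m
  induction m with
  | zero =>
    intro a
    have : ∀ x : ℕ → Q, (mart P h a 0 x) ^ 2 = (0:ℝ) := by
      intro x; simp [mart]
    rw [Ex_congr _ _ _ this, Ex_const P init hinit1 hP1]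
    simp
  | succ m ih =>
    intro a
    show Ex P init ((a+m)+1) _ ≤ _
    rw [Ex_tower]
    have hpt : ∀ x : ℕ → Q,
        (∑ q, P (x (a+m)) q * (mart P h a (m+1) (Function.update x (a+m+1) q)) ^ 2)
          ≤ (mart P h a m x) ^ 2 + 4 * c ^ 2 := by
      intro x
      have : ∀ q : Q, mart P h a (m+1) (Function.update x (a+m+1) q)
          = mart P h a m x + (h q - Pf P h (x (a+m))) := fun q => mart_update P h a m x q
      rw [Finset.sum_congr rfl fun q _ => by rw [this q]]
      exact inner2 hP0 hP1 hc (x (a+m)) (mart P h a m x)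
    calc Ex P init (a+m) _ ≤ Ex P init (a+m)
          (fun x => (mart P h a m x) ^ 2 + 4 * c ^ 2) :=
        Ex_mono P init hP0 hinit0 _ hpt
      _ = Ex P init (a+m) (fun x => (mart P h a m x) ^ 2) + 4 * c ^ 2 := by
          rw [Ex_add P init (a+m) _ (fun _ => 4 * c ^ 2), Ex_const P init hinit1 hP1]
      _ ≤ 4 * c ^ 2 * m + 4 * c ^ 2 := by linarith [ih a]
      _ ≤ 4 * c ^ 2 * (m+1 : ℕ) := by push_cast; nlinarith [sq_nonneg c]

lemma moment4 : ∀ (m a : ℕ),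
    Ex P init (a+m) (fun x => (mart P h a m x) ^ 4) ≤ 200 * c ^ 4 * (m:ℝ) ^ 2 := by
  intro m
  induction m with
  | zero =>
    intro a
    have : ∀ x : ℕ → Q, (mart P h a 0 x) ^ 4 = (0:ℝ) := by
      intro x; simp [mart]
    rw [Ex_congr _ _ _ this, Ex_const P init hinit1 hP1]
    simp
  | succ m ih =>
    intro a
    show Ex P init ((a+m)+1) _ ≤ _
    rw [Ex_tower]
    have hpt : ∀ x : ℕ → Q,
        (∑ q, P (x (a+m)) q * (mart P h a (m+1) (Function.update x (a+m+1) q)) ^ 4)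
          ≤ (mart P h a m x) ^ 4 + (40 * c ^ 2 * (mart P h a m x) ^ 2 + 32 * c ^ 4) := by
      intro x
      have : ∀ q : Q, mart P h a (m+1) (Function.update x (a+m+1) q)
          = mart P h a m x + (h q - Pf P h (x (a+m))) := fun q => mart_update P h a m x q
      rw [Finset.sum_congr rfl fun q _ => by rw [this q]]
      have := inner4 hP0 hP1 hc (x (a+m)) (mart P h a m x)
      linarith
    calc Ex P init (a+m) _ ≤ Ex P init (a+m)
          (fun x => (mart P h a m x) ^ 4
            + (40 * c ^ 2 * (mart P h a m x) ^ 2 + 32 * c ^ 4)) :=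
        Ex_mono P init hP0 hinit0 _ hpt
      _ = Ex P init (a+m) (fun x => (mart P h a m x) ^ 4)
            + (40 * c ^ 2 * Ex P init (a+m) (fun x => (mart P h a m x) ^ 2) + 32 * c ^ 4) := by
          rw [Ex_add P init (a+m) _ (fun x => 40 * c ^ 2 * (mart P h a m x) ^ 2 + 32 * c ^ 4),
            Ex_add P init (a+m) _ (fun _ => 32 * c ^ 4),
            Ex_smul P init (a+m) (40 * c ^ 2), Ex_const P init hinit1 hP1]
      _ ≤ 200 * c ^ 4 * (m:ℝ) ^ 2 + (40 * c ^ 2 * (4 * c ^ 2 * m) + 32 * c ^ 4) := by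
          have h2 := moment2 hP0 hP1 hinit0 hinit1 hc m a
          have h4 := ih a
          have hcsq : (0:ℝ) ≤ 40 * c ^ 2 := by positivity
          nlinarith [h2, h4]
      _ ≤ 200 * c ^ 4 * ((m:ℕ)+1:ℝ) ^ 2 := by
          have : (0:ℝ) ≤ c ^ 4 := by positivity
          have hm : (0:ℝ) ≤ (m:ℝ) := Nat.cast_nonneg m
          nlinarith
      _ = 200 * c ^ 4 * ((m+1:ℕ):ℝ) ^ 2 := by push_cast; ring

end MomentBounds

section Deviation

variable {Q : Type*} [Fintype Q] [DecidableEq Q] [Nonempty Q]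
set_option linter.unusedSectionVars false

/-- the centered window sum -/
def dev (g : Q → ℝ) (f : ℝ) (a n : ℕ) (x : ℕ → Q) : ℝ :=
  ∑ i ∈ Finset.range n, (g (x (a+i)) - f)

lemma dev_congr (g : Q → ℝ) (f : ℝ) (a m : ℕ) {x y : ℕ → Q}
    (hxy : ∀ i, i ≤ a + m → x i = y i) : dev g f a (m+1) x = dev g f a (m+1) y := by
  unfold dev
  refine Finset.sum_congr rfl fun i hi => ?_
  rw [Finset.mem_range] at hi
  rw [hxy (a+i) (by omega)]

variable {P : Q → Q → ℝ} {init : Q → ℝ} {h g : Q → ℝ} {f c : ℝ}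
variable (hP0 : ∀ q q', 0 ≤ P q q') (hP1 : ∀ q, (∑ q', P q q') = 1)
variable (hinit0 : ∀ q, 0 ≤ init q) (hinit1 : (∑ q, init q) = 1)
variable (hc : ∀ q, |h q| ≤ c)
variable (hPoisson : ∀ y, g y - f = h y - Pf P h y)

include hPoisson in
lemma dev_telescope (a m : ℕ) (x : ℕ → Q) :
    dev g f a (m+1) x = (h (x a) - Pf P h (x (a+m))) + mart P h a m x := by
  unfold dev mart
  rw [Finset.sum_congr rfl fun i _ => hPoisson (x (a+i))]
  rw [Finset.sum_sub_distrib, Finset.sum_sub_distrib]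
  rw [Finset.sum_range_succ' (fun i => h (x (a+i))) m, Finset.sum_range_succ]
  have e1 : ∀ j, a + (j+1) = a + j + 1 := fun j => by omega
  simp only [Nat.add_zero, e1]
  ring

include hP0 hP1 hc hPoisson in
lemma dev_abs_le (a m : ℕ) (x : ℕ → Q) :
    |dev g f a (m+1) x| ≤ 2 * c + |mart P h a m x| := by
  rw [dev_telescope hPoisson a m x]
  calc |(h (x a) - Pf P h (x (a+m))) + mart P h a m x|
      ≤ |h (x a) - Pf P h (x (a+m))| + |mart P h a m x| := abs_add_le _ _
    _ ≤ (|h (x a)| + |Pf P h (x (a+m))|) + |mart P h a m x| := by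
        linarith [abs_sub (h (x a)) (Pf P h (x (a+m)))]
    _ ≤ 2 * c + |mart P h a m x| := by
        linarith [hc (x a), abs_Pf_le hP0 hP1 hc (x (a+m))]

lemma quad_ineq (u v : ℝ) (hu : 0 ≤ u) (hv : 0 ≤ v) :
    (u + v) ^ 4 ≤ 8 * u ^ 4 + 8 * v ^ 4 := by
  nlinarith [sq_nonneg (u - v), sq_nonneg (u + v), sq_nonneg (u^2 - v^2),
    mul_nonneg hu hv, sq_nonneg u, sq_nonneg v,
    mul_nonneg (mul_nonneg hu hu) (mul_nonneg hv hv)]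

include hP0 hP1 hinit0 hinit1 hc hPoisson in
lemma momentDev (a m : ℕ) :
    Ex P init (a+m) (fun x => (dev g f a (m+1) x) ^ 4)
      ≤ 1728 * c ^ 4 * ((m:ℝ)+1) ^ 2 := by
  have hcc : 0 ≤ c := hc0 hP0 hP1 hc
  have hpt : ∀ x : ℕ → Q, (dev g f a (m+1) x) ^ 4
      ≤ 128 * c ^ 4 + 8 * (mart P h a m x) ^ 4 := by
    intro x
    have h1 : |dev g f a (m+1) x| ^ 4 ≤ (2 * c + |mart P h a m x|) ^ 4 :=
      pow_le_pow_left₀ (abs_nonneg _) (dev_abs_le hP0 hP1 hc hPoisson a m x) 4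
    have h2 : (2 * c + |mart P h a m x|) ^ 4
        ≤ 8 * (2*c) ^ 4 + 8 * |mart P h a m x| ^ 4 :=
      quad_ineq _ _ (by positivity) (abs_nonneg _)
    have e1 : |dev g f a (m+1) x| ^ 4 = (dev g f a (m+1) x) ^ 4 := by
      rw [show (4:ℕ) = 2*2 from rfl, pow_mul, pow_mul, sq_abs]
    have e2 : |mart P h a m x| ^ 4 = (mart P h a m x) ^ 4 := by
      rw [show (4:ℕ) = 2*2 from rfl, pow_mul, pow_mul, sq_abs]
    rw [e1] at h1
    rw [e2] at h2
    nlinarith [h1, h2]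
  calc Ex P init (a+m) (fun x => (dev g f a (m+1) x) ^ 4)
      ≤ Ex P init (a+m) (fun x => 128 * c ^ 4 + 8 * (mart P h a m x) ^ 4) :=
        Ex_mono P init hP0 hinit0 _ hpt
    _ = 128 * c ^ 4 + 8 * Ex P init (a+m) (fun x => (mart P h a m x) ^ 4) := by
        rw [Ex_add P init (a+m) (fun _ => 128 * c ^ 4)
            (fun x => 8 * (mart P h a m x) ^ 4),
          Ex_const P init hinit1 hP1,
          Ex_smul P init (a+m) 8 (fun x => (mart P h a m x) ^ 4)]
    _ ≤ 128 * c ^ 4 + 8 * (200 * c ^ 4 * (m:ℝ) ^ 2) := by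
        have := moment4 hP0 hP1 hinit0 hinit1 hc m a
        linarith
    _ ≤ 1728 * c ^ 4 * ((m:ℝ)+1) ^ 2 := by
        have : (0:ℝ) ≤ c ^ 4 := by positivity
        have hm : (0:ℝ) ≤ (m:ℝ) := Nat.cast_nonneg m
        nlinarith

end Deviation

section Bridge

variable {Q : Type*} [Fintype Q] [DecidableEq Q]
set_option linter.unusedSectionVars false

variable {Ω : Type*} [MeasurableSpace Ω] (μ : Measure Ω)
variable (P : Q → Q → ℝ) (init : Q → ℝ) (X : ℕ → Ω → Q)

/-- decomposition of an event depending on finitely many coordinates -/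
lemma event_measure
    (hmeas : ∀ n, Measurable[inferInstance, ⊤] (X n))
    (hcyl : ∀ (n : ℕ) (path : ℕ → Q),
      μ {ω | ∀ i ≤ n, X i ω = path i} =
        ENNReal.ofReal (init (path 0) * ∏ i ∈ Finset.range n, P (path i) (path (i + 1))))
    (N : ℕ) (C : (ℕ → Q) → Prop) [DecidablePred fun p : Fin (N+1) → Q => C (extf N p)]
    (hC : ∀ x y : ℕ → Q, (∀ i ≤ N, x i = y i) → (C x ↔ C y)) :
    μ {ω | C (fun i => X i ω)}
      = ∑ p ∈ Finset.univ.filter (fun p : Fin (N+1) → Q => C (extf N p)),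
          ENNReal.ofReal (pmw P init N p) := by
  classical
  set B : (Fin (N+1) → Q) → Set Ω := fun p => {ω | ∀ i ≤ N, X i ω = extf N p i} with hB
  have hBmeas : ∀ p, MeasurableSet (B p) := by
    intro p
    have : B p = ⋂ i, ⋂ (_ : i ≤ N), (X i) ⁻¹' {extf N p i} := by
      ext ω; simp [hB, Set.mem_iInter]
    rw [this]
    exact MeasurableSet.iInter fun i => MeasurableSet.iInter fun _ => hmeas i trivial
  have hBval : ∀ p, μ (B p) = ENNReal.ofReal (pmw P init N p) := by
    intro p
    exact hcyl N (extf N p)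
  have hset : {ω | C (fun i => X i ω)}
      = ⋃ p ∈ Finset.univ.filter (fun p : Fin (N+1) → Q => C (extf N p)), B p := by
    ext ω
    simp only [Set.mem_setOf_eq, Set.mem_iUnion, Finset.mem_filter, Finset.mem_univ,
      true_and, exists_prop]
    constructor
    · intro hω
      refine ⟨fun i => X i ω, ?_, ?_⟩
      · exact (hC (extf N (fun i : Fin (N+1) => X i ω)) (fun i => X i ω)
          (fun i hi => by rw [extf_lt _ (by omega : i < N+1)])).2 hω
      · intro i hi
        rw [extf_lt _ (by omega : i < N+1)]
    · rintro ⟨p, hp, hω⟩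
      exact (hC _ _ fun i hi => hω i hi).2 hp
  rw [hset]
  rw [measure_biUnion_finset ?disj (fun p _ => hBmeas p)]
  · exact Finset.sum_congr rfl fun p _ => hBval p
  case disj =>
    intro p hp p' hp' hpp'
    simp only [Function.onFun]
    rw [Set.disjoint_left]
    intro ω hωp hωp'
    apply hpp'
    funext i
    have h1 := hωp i.val (by omega)
    have h2 := hωp' i.val (by omega)
    rw [extf_lt _ (by omega : i.val < N+1)] at h1 h2
    simp only [Fin.eta] at h1 h2
    rw [← h1, ← h2]

/-- Markov/Chebyshev inequality at the level of path sums -/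
lemma markov_sum (hP0 : ∀ q q', 0 ≤ P q q') (hinit0 : ∀ q, 0 ≤ init q)
    (N : ℕ) (G : (ℕ → Q) → ℝ) {t : ℝ} (ht : 0 < t)
    (D : (Fin (N+1) → Q) → Prop) [DecidablePred D]
    (hD : ∀ p, D p → t ≤ |G (extf N p)|) :
    ∑ p ∈ Finset.univ.filter D, pmw P init N p
      ≤ Ex P init N (fun x => (G x) ^ 4) / t ^ 4 := by
  have ht4 : (0:ℝ) < t ^ 4 := by positivity
  have step1 : ∀ p ∈ Finset.univ.filter D,
      pmw P init N p ≤ pmw P init N p * ((G (extf N p)) ^ 4 / t ^ 4) := by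
    intro p hp
    rw [Finset.mem_filter] at hp
    have habs : t ^ 4 ≤ |G (extf N p)| ^ 4 := pow_le_pow_left₀ ht.le (hD p hp.2) 4
    have : (G (extf N p)) ^ 4 = |G (extf N p)| ^ 4 := by
      rw [show (4:ℕ) = 2*2 from rfl, pow_mul, pow_mul, sq_abs]
    have hone : (1:ℝ) ≤ (G (extf N p)) ^ 4 / t ^ 4 := by
      rw [this, le_div_iff₀ ht4, one_mul]; exact habs
    nlinarith [pmw_nonneg P init hP0 hinit0 N p, hone]
  calc ∑ p ∈ Finset.univ.filter D, pmw P init N p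
      ≤ ∑ p ∈ Finset.univ.filter D,
          pmw P init N p * ((G (extf N p)) ^ 4 / t ^ 4) := Finset.sum_le_sum step1
    _ ≤ ∑ p : Fin (N+1) → Q, pmw P init N p * ((G (extf N p)) ^ 4 / t ^ 4) := by
        refine Finset.sum_le_sum_of_subset_of_nonneg (Finset.filter_subset _ _) ?_
        intro p _ _
        have : (0:ℝ) ≤ (G (extf N p)) ^ 4 / t ^ 4 := by positivity
        exact mul_nonneg (pmw_nonneg P init hP0 hinit0 N p) this
    _ = Ex P init N (fun x => (G x) ^ 4) / t ^ 4 := by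
        rw [Ex, Finset.sum_div]
        exact Finset.sum_congr rfl fun p _ => by ring

end Bridge

lemma poisson_exists {Q : Type*} [Fintype Q] [DecidableEq Q] [Nonempty Q]
    (P : Q → Q → ℝ) (π : Q → ℝ)
    (hP0 : ∀ q q', 0 ≤ P q q') (hP1 : ∀ q, (∑ q', P q q') = 1)
    (hirr : IsIrreducibleMatrix P)
    (hπ : IsStationaryDistr P π) (g : Q → ℝ) :
    ∃ h : Q → ℝ, ∀ q, g q - (∑ q', π q' * g q') = h q - ∑ q', P q q' * h q' := by
  classical
  -- the linear map T u = u - P u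
  let T : (Q → ℝ) →ₗ[ℝ] (Q → ℝ) :=
    { toFun := fun u q => u q - ∑ q', P q q' * u q'
      map_add' := by
        intro u v; funext q
        simp only [Pi.add_apply, mul_add, Finset.sum_add_distrib]; ring
      map_smul' := by
        intro r u; funext q
        simp only [Pi.smul_apply, smul_eq_mul, RingHom.id_apply]
        rw [mul_sub, Finset.mul_sum]
        congr 1
        exact Finset.sum_congr rfl (fun q' _ => by ring) }
  let φ : (Q → ℝ) →ₗ[ℝ] ℝ :=
    { toFun := fun u => ∑ q, π q * u q
      map_add' := by intro u v; simp [mul_add, Finset.sum_add_distrib]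
      map_smul' := by
        intro r u; simp only [Pi.smul_apply, smul_eq_mul, RingHom.id_apply, Finset.mul_sum]
        exact Finset.sum_congr rfl (fun q' _ => by ring) }
  -- harmonic functions are constant
  have hharm : ∀ u : Q → ℝ, (∀ q, u q = ∑ q', P q q' * u q') → ∀ q q', u q = u q' := by
    intro u hu
    obtain ⟨q₀, -, hq₀⟩ := Finset.exists_max_image Finset.univ u ⟨Classical.arbitrary Q, Finset.mem_univ _⟩
    have key : ∀ x, u x = u q₀ → ∀ y, 0 < P x y → u y = u q₀ := by
      intro x hx y hy
      have h0 : ∑ q', P x q' * (u q₀ - u q') = 0 := by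
        simp only [mul_sub, Finset.sum_sub_distrib, ← Finset.sum_mul, hP1, ← hu x]
        rw [hx]; ring
      have hterm : ∀ q' ∈ Finset.univ, 0 ≤ P x q' * (u q₀ - u q') := fun q' _ =>
        mul_nonneg (hP0 x q') (sub_nonneg.2 (hq₀ q' (Finset.mem_univ _)))
      have := (Finset.sum_eq_zero_iff_of_nonneg hterm).1 h0 y (Finset.mem_univ _)
      have h2 : u q₀ - u y = 0 := by
        rcases mul_eq_zero.1 this with h | h
        · exact absurd h (ne_of_gt hy)
        · exact h
      linarith
    have hall : ∀ q, u q = u q₀ := by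
      intro q
      obtain ⟨k, path, hp0, hpk, hpos⟩ := hirr q₀ q
      have : ∀ i, i ≤ k → u (path i) = u q₀ := by
        intro i
        induction i with
        | zero => intro _; rw [hp0]
        | succ j ih => intro hj; exact key _ (ih (by omega)) _ (hpos j (by omega))
      rw [← hpk]; exact this k le_rfl
    intro q q'; rw [hall q, hall q']
  have hker : LinearMap.ker T = Submodule.span ℝ {(fun _ => 1 : Q → ℝ)} := by
    apply le_antisymm
    · intro u hu
      rw [LinearMap.mem_ker] at hu
      have hu' : ∀ q, u q = ∑ q', P q q' * u q' := by
        intro q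
        have := congrFun hu q
        simpa [T, sub_eq_zero] using this
      rw [Submodule.mem_span_singleton]
      refine ⟨u (Classical.arbitrary Q), funext fun q => ?_⟩
      simp [hharm u hu' (Classical.arbitrary Q) q]
    · rw [Submodule.span_le, Set.singleton_subset_iff]
      simp only [SetLike.mem_coe, LinearMap.mem_ker]
      funext q
      simp [T, hP1 q]
  have h1ne : (fun _ => 1 : Q → ℝ) ≠ 0 := by
    intro h
    have := congrFun h (Classical.arbitrary Q)
    simp at this
  have hfrker : Module.finrank ℝ (LinearMap.ker T) = 1 := by
    rw [hker]; exact finrank_span_singleton h1ne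
  have hfrV : Module.finrank ℝ (Q → ℝ) = Fintype.card Q :=
    Module.finrank_fintype_fun_eq_card ℝ
  have hrank := LinearMap.finrank_range_add_finrank_ker T
  have hφsurj : Function.Surjective φ := by
    intro r
    refine ⟨fun _ => r, ?_⟩
    show (∑ q, π q * r) = r
    rw [← Finset.sum_mul, hπ.2.1, one_mul]
  have hφtop : LinearMap.range φ = ⊤ := LinearMap.range_eq_top.2 hφsurj
  have hrankφ := LinearMap.finrank_range_add_finrank_ker φ
  rw [hφtop] at hrankφ
  have hfrtop : Module.finrank ℝ (⊤ : Submodule ℝ ℝ) = 1 := by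
    rw [finrank_top]; exact Module.finrank_self ℝ
  have hle : LinearMap.range T ≤ LinearMap.ker φ := by
    rintro v ⟨u, rfl⟩
    rw [LinearMap.mem_ker]
    show (∑ q, π q * (u q - ∑ q', P q q' * u q')) = 0
    have expand : ∀ q, π q * (u q - ∑ q', P q q' * u q')
        = π q * u q - ∑ q', π q * P q q' * u q' := by
      intro q
      rw [mul_sub, Finset.mul_sum]
      congr 1
      exact Finset.sum_congr rfl (fun q' _ => by ring)
    rw [Finset.sum_congr rfl (fun q _ => expand q), Finset.sum_sub_distrib,
      Finset.sum_comm]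
    have : ∀ q', (∑ q, π q * P q q' * u q') = π q' * u q' := by
      intro q'
      rw [← Finset.sum_mul, hπ.2.2 q']
    rw [Finset.sum_congr rfl (fun q' _ => this q'), sub_self]
  have heq : LinearMap.range T = LinearMap.ker φ := by
    apply Submodule.eq_of_le_of_finrank_eq hle
    omega
  set f := ∑ q', π q' * g q' with hf
  have hmem : (fun q => g q - f) ∈ LinearMap.ker φ := by
    rw [LinearMap.mem_ker]
    show (∑ q, π q * (g q - f)) = 0
    simp only [mul_sub, Finset.sum_sub_distrib, ← Finset.sum_mul, hπ.2.1, hf]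
    ring
  rw [← heq] at hmem
  obtain ⟨h, hh⟩ := hmem
  exact ⟨h, fun q => (congrFun hh q).symm⟩

set_option maxHeartbeats 1000000 in
/-- Corollary of the infix ergodic theorem: the frequency of a letter `σ` in the
infix of length `n` starting at offset `s n` of the word generated by a finite
irreducible Markov chain converges a.s. to the stationary letter frequency. -/
theorem letter_frequency_over_infixes
    {Ω Q A : Type*} [MeasurableSpace Ω] [Fintype Q] [DecidableEq Q] [DecidableEq A]
    (μ : Measure Ω) [IsProbabilityMeasure μ]
    (P : Q → Q → ℝ) (init : Q → ℝ) (X : ℕ → Ω → Q)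
    (hMarkov : IsMarkovTraj P init X μ)
    (hirr : IsIrreducibleMatrix P)
    (π : Q → ℝ) (hπ : IsStationaryDistr P π)
    (L : Q → A) (s : ℕ → ℕ) (σ : A) :
    ∀ᵐ ω ∂μ, Tendsto
      (fun n =>
        (((Finset.range n).filter (fun i => L (X (s n + i) ω) = σ)).card : ℝ) / n)
      atTop (nhds (∑ q ∈ Finset.univ.filter (fun q => L q = σ), π q)) := by
  classical
  obtain ⟨hinit0, hinit1, hP0, hP1, hmeas, hcyl⟩ := hMarkov
  obtain ⟨hπ0, hπ1, hπstat⟩ := hπ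
  have hQ : Nonempty Q := by
    by_contra hQ
    rw [not_nonempty_iff] at hQ
    rw [Finset.univ_eq_empty, Finset.sum_empty] at hπ1
    exact one_ne_zero hπ1.symm
  set g : Q → ℝ := fun q => if L q = σ then 1 else 0 with hg
  set f : ℝ := ∑ q', π q' * g q' with hf
  have htarget : (∑ q ∈ Finset.univ.filter (fun q => L q = σ), π q) = f := by
    rw [hf, Finset.sum_filter]
    refine Finset.sum_congr rfl fun q _ => ?_
    by_cases hq : L q = σ <;> simp [hg, hq]
  rw [htarget]
  obtain ⟨h, hPoisson⟩ := poisson_exists P π hP0 hP1 hirr ⟨hπ0, hπ1, hπstat⟩ g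
  have hPoisson' : ∀ y, g y - f = h y - Pf P h y := hPoisson
  set c : ℝ := ∑ q, |h q| with hcdef
  have hc : ∀ q, |h q| ≤ c := fun q =>
    Finset.single_le_sum (fun q' _ => abs_nonneg (h q')) (Finset.mem_univ q)
  have hcc : (0:ℝ) ≤ c := hc0 hP0 hP1 hc
  -- the bad events
  set Bad : ℕ → ℕ → Set Ω := fun k n =>
    {ω | ((n:ℝ)+1) / ((k:ℝ)+1) ≤ |dev g f (s (n+1)) (n+1) (fun i => X i ω)|} with hBadDef
  have hBadmeasure : ∀ k n, μ (Bad k n)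
      ≤ ENNReal.ofReal ((1728 * c^4 * ((k:ℝ)+1)^4) / ((n:ℝ)+1)^2) := by
    intro k n
    set a := s (n+1) with ha
    set t : ℝ := ((n:ℝ)+1) / ((k:ℝ)+1) with htdef
    have ht : 0 < t := by positivity
    have hC : ∀ x y : ℕ → Q, (∀ i ≤ a + n, x i = y i) →
        ((t ≤ |dev g f a (n+1) x|) ↔ (t ≤ |dev g f a (n+1) y|)) := by
      intro x y hxy
      rw [dev_congr g f a n hxy]
    have h1 := event_measure μ P init X hmeas hcyl (a+n)
      (fun x => t ≤ |dev g f a (n+1) x|) hC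
    have h2 := markov_sum P init hP0 hinit0 (a+n)
      (fun x => dev g f a (n+1) x) ht
      (fun p : Fin (a+n+1) → Q => t ≤ |dev g f a (n+1) (extf (a+n) p)|)
      (fun p hp => hp)
    have h3 := momentDev hP0 hP1 hinit0 hinit1 hc hPoisson' a n
    have hq1 : μ (Bad k n) = ∑ p ∈ Finset.univ.filter
        (fun p : Fin (a+n+1) → Q => t ≤ |dev g f a (n+1) (extf (a+n) p)|),
        ENNReal.ofReal (pmw P init (a+n) p) := h1
    rw [hq1, ← ENNReal.ofReal_sum_of_nonneg
      (fun p _ => pmw_nonneg P init hP0 hinit0 (a+n) p)]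
    refine ENNReal.ofReal_le_ofReal (le_trans h2 ?_)
    have hEx : Ex P init (a+n) (fun x => (dev g f a (n+1) x) ^ 4)
        ≤ 1728 * c ^ 4 * ((n:ℝ)+1) ^ 2 := h3
    calc Ex P init (a+n) (fun x => (dev g f a (n+1) x) ^ 4) / t ^ 4
        ≤ (1728 * c ^ 4 * ((n:ℝ)+1) ^ 2) / t ^ 4 := by gcongr
      _ = (1728 * c^4 * ((k:ℝ)+1)^4) / ((n:ℝ)+1)^2 := by
          rw [htdef]
          have hn1 : ((n:ℝ)+1) ≠ 0 := by positivity
          have hk1 : ((k:ℝ)+1) ≠ 0 := by positivity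
          field_simp
  have hsum : ∀ k, (∑' n, μ (Bad k n)) ≠ ⊤ := by
    intro k
    set C := 1728 * c^4 * ((k:ℝ)+1)^4 with hCdef
    have hCpos : 0 ≤ C := by positivity
    have hsummable : Summable (fun n : ℕ => C / ((n:ℝ)+1)^2) := by
      have h0 : Summable (fun n : ℕ => 1 / ((n:ℝ))^2) :=
        Real.summable_one_div_nat_pow.2 one_lt_two
      have h1 : Summable (fun n : ℕ => 1 / (((n+1) : ℕ):ℝ)^2) :=
        (summable_nat_add_iff 1).2 h0
      have h2 : Summable (fun n : ℕ => 1 / ((n:ℝ)+1)^2) := by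
        convert h1 using 2 with n
        push_cast
        ring
      simpa [div_eq_mul_inv, mul_comm] using h2.mul_left C
    have hle : (∑' n, μ (Bad k n))
        ≤ ∑' n : ℕ, ENNReal.ofReal (C / ((n:ℝ)+1)^2) :=
      ENNReal.tsum_le_tsum fun n => hBadmeasure k n
    have : (∑' n : ℕ, ENNReal.ofReal (C / ((n:ℝ)+1)^2))
        = ENNReal.ofReal (∑' n : ℕ, C / ((n:ℝ)+1)^2) :=
      (ENNReal.ofReal_tsum_of_nonneg (fun n => by positivity) hsummable).symm
    rw [this] at hle
    exact ne_top_of_le_ne_top ENNReal.ofReal_ne_top hle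
  have hae : ∀ᵐ ω ∂μ, ∀ k : ℕ, ∀ᶠ n in atTop, ω ∉ Bad k n := by
    rw [ae_all_iff]
    exact fun k => ae_eventually_notMem (hsum k)
  filter_upwards [hae] with ω hω
  rw [Metric.tendsto_atTop]
  intro ε hε
  obtain ⟨k, hk⟩ := exists_nat_one_div_lt hε
  obtain ⟨N₀, hN₀⟩ := (eventually_atTop.1 (hω k))
  refine ⟨N₀ + 1, fun n hn => ?_⟩
  obtain ⟨m, rfl⟩ : ∃ m, n = m + 1 := ⟨n - 1, by omega⟩
  have hm : m ≥ N₀ := by omega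
  have hnot := hN₀ m hm
  rw [hBadDef] at hnot
  simp only [Set.mem_setOf_eq, not_le] at hnot
  set a := s (m+1) with ha
  have hcount : (((Finset.range (m+1)).filter
      (fun i => L (X (a + i) ω) = σ)).card : ℝ)
      = ∑ i ∈ Finset.range (m+1), g (X (a + i) ω) := by
    rw [hg]
    rw [Finset.sum_boole]
  have hdev : dev g f a (m+1) (fun i => X i ω)
      = (∑ i ∈ Finset.range (m+1), g (X (a + i) ω)) - ((m:ℝ)+1) * f := by
    unfold dev
    rw [Finset.sum_sub_distrib, Finset.sum_const, Finset.card_range]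
    push_cast
    ring
  have hmpos : (0:ℝ) < (m:ℝ)+1 := by positivity
  rw [Real.dist_eq]
  have heq : (((Finset.range (m+1)).filter
      (fun i => L (X (a + i) ω) = σ)).card : ℝ) / ((m+1:ℕ):ℝ) - f
      = dev g f a (m+1) (fun i => X i ω) / ((m:ℝ)+1) := by
    rw [hcount, hdev]
    push_cast
    field_simp
  push_cast at heq ⊢
  rw [heq, abs_div, abs_of_pos hmpos, div_lt_iff₀ hmpos]
  calc |dev g f a (m+1) (fun i => X i ω)| < ((m:ℝ)+1) / ((k:ℝ)+1) := hnot
    _ ≤ ε * ((m:ℝ)+1) := by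
      rw [div_le_iff₀ (by positivity : (0:ℝ) < (k:ℝ)+1)]
      have hk' : 1 / ((k:ℝ)+1) < ε := hk
      rw [div_lt_iff₀ (by positivity : (0:ℝ) < (k:ℝ)+1)] at hk'
      nlinarith [mul_lt_mul_of_pos_left hk' hmpos]
end
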